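/- In the preferential attachment process (G_1^t), for all integers a, t with 1 ≤ a ≤ t, the expected value of Σ_{j=1}^{a} deg(v_j, t) (the sum of the degrees in G_1^t of the first a vertices, loops counting twice) equals 2a · ∏_{i=a+1}^{t} (2i)/(2i−1) = 2a · Γ(t+1)Γ(a+1/2) / ( Γ(t+1/2)Γ(a+1) ). -/

import Mathlib

open Finset

noncomputable section

/-- Sample space for the preferential attachment process `G_1^N` (0-indexed vertices):
at step `t` the new vertex `t` sends its single edge to the vertex `σ t ≤ t`
(a loop when `σ t = t`). -/
abbrev PASpace (N : ℕ) : Type := ∀ t : Fin N, Fin (t.1 + 1)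

/-- The degree of vertex `s` in `G_1^t` (the graph after `t` steps), loops counted
twice: one for its own out-edge (if `s < t`) plus the number of in-edges received. -/
def paDeg {N : ℕ} (σ : PASpace N) (s t : ℕ) : ℕ :=
  (if s < t then 1 else 0) +
    (Finset.univ.filter (fun j : Fin N => j.1 < t ∧ (σ j : ℕ) = s)).card

/-- The probability of the outcome `σ` of the preferential attachment process: at step
`t`, vertex `σ t = s < t` is chosen with probability `deg(s, t)/(2t+1)` and `σ t = t`
(a loop) with probability `1/(2t+1)` (0-indexed steps). -/
noncomputable def paWeight {N : ℕ} (σ : PASpace N) : ℝ :=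
  ∏ t : Fin N,
    ((paDeg σ (σ t : ℕ) t.1 : ℝ) + (if (σ t : ℕ) = t.1 then 1 else 0)) /
      (2 * (t.1 : ℝ) + 1)

open scoped Classical in
/-- The probability of the event `E` for the preferential attachment process `G_1^N`. -/
noncomputable def paProb (N : ℕ) (E : PASpace N → Prop) : ℝ :=
  ∑ σ : PASpace N, if E σ then paWeight σ else 0

/-- The degree of vertex `j` of the multigraph `G_m^s` (obtained from `G_1^{ms}` by
identifying consecutive blocks of `m` vertices), loops counted twice; the ambient
process runs for `m·n ≥ m·s` steps. -/
def paDegM (m n : ℕ) (σ : PASpace (m * n)) (j s : ℕ) : ℕ :=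
  (Finset.univ.filter (fun t : Fin (m * n) => t.1 < m * s ∧ t.1 / m = j)).card +
    (Finset.univ.filter (fun t : Fin (m * n) => t.1 < m * s ∧ (σ t : ℕ) / m = j)).card

/-- The number of edges (with multiplicity, loops included) of `G_m^n` with both
endpoints in `A`. -/
def paEdgesIn (m n : ℕ) (σ : PASpace (m * n)) (A : Finset ℕ) : ℕ :=
  (Finset.univ.filter
    (fun t : Fin (m * n) => t.1 / m ∈ A ∧ (σ t : ℕ) / m ∈ A)).card

/-- The modularity `q_𝒜(G_m^n)` of a partition `𝒜` of the vertex set `{0, …, n−1}` of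
the multigraph `G_m^n`, which has exactly `m·n` edges. -/
noncomputable def paQ (m n : ℕ) (σ : PASpace (m * n))
    (P : Finpartition (Finset.range n)) : ℝ :=
  ∑ A ∈ P.parts,
    ((paEdgesIn m n σ A : ℝ) / (m * n) -
      (∑ j ∈ A, (paDegM m n σ j n : ℝ)) ^ 2 / (4 * ((m : ℝ) * n) ^ 2))

/-- The modularity `q*(G_m^n)`: the maximum of `q_𝒜` over all partitions `𝒜`. -/
noncomputable def paModularity (m n : ℕ) (σ : PASpace (m * n)) : ℝ :=
  sSup {q : ℝ | ∃ P : Finpartition (Finset.range n), q = paQ m n σ P}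

/-! Let `S_N` be the total degree of the first `a` vertices after `N` steps. For `a ≤ N`, the
vertex arriving at step `N + 1` attaches to one of them with probability `S_N / (2N + 1)`,
which raises `S` by one, so `E S_{N+1} = (2N + 2)/(2N + 1) · E S_N`. At time `a` the first `a`
vertices are all vertices, so `S_a = 2a` by the handshake lemma. The Gamma form comes from
telescoping `Γ(x + 1) = x Γ(x)`. -/

/-- The vertex arriving at (0-indexed) step `N` attaches to `x`; `x = N` is its loop. -/
def paAttachProb {N : ℕ} (σ : PASpace N) (x : Fin (N + 1)) : ℝ :=
  ((paDeg σ (x : ℕ) N : ℝ) + (if (x : ℕ) = N then 1 else 0)) / (2 * (N : ℝ) + 1)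

def paExpect (N : ℕ) (f : PASpace N → ℝ) : ℝ :=
  ∑ σ : PASpace N, paWeight σ * f σ

def paDegSum {N : ℕ} (σ : PASpace N) (a t : ℕ) : ℝ :=
  ∑ j ∈ range a, (paDeg σ j t : ℝ)

section Snoc

variable {N : ℕ} (σ : PASpace N) (x : Fin (N + 1))

lemma paDeg_snoc_of_le {s t : ℕ} (ht : t ≤ N) :
    paDeg (Fin.snoc σ x : PASpace (N + 1)) s t = paDeg σ s t := by
  simp only [paDeg, card_filter, Fin.sum_univ_castSucc, Fin.snoc_castSucc, Fin.snoc_last,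
    Fin.val_castSucc, Fin.val_last, not_lt.2 ht, false_and, if_false, add_zero]

lemma paDeg_snoc_succ {s : ℕ} (hs : s < N) :
    paDeg (Fin.snoc σ x : PASpace (N + 1)) s (N + 1) =
      paDeg σ s N + if (x : ℕ) = s then 1 else 0 := by
  simp only [paDeg, card_filter, Fin.sum_univ_castSucc, Fin.snoc_castSucc, Fin.snoc_last,
    Fin.val_castSucc, Fin.val_last, Fin.is_lt, true_and, if_pos hs,
    if_pos (hs.trans (lt_add_one N))]
  ring

lemma paWeight_snoc :
    paWeight (Fin.snoc σ x : PASpace (N + 1)) = paWeight σ * paAttachProb σ x := by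
  simp only [paWeight, paAttachProb, Fin.prod_univ_castSucc, Fin.snoc_castSucc, Fin.snoc_last,
    Fin.val_castSucc, Fin.val_last, paDeg_snoc_of_le σ x le_rfl]
  congr 1
  exact prod_congr rfl fun t _ => by rw [paDeg_snoc_of_le σ x t.is_lt.le]

end Snoc

lemma sum_paSpace_succ {M : Type*} [AddCommMonoid M] {N : ℕ} (f : PASpace (N + 1) → M) :
    ∑ σ', f σ' = ∑ σ : PASpace N, ∑ x : Fin (N + 1), f (Fin.snoc σ x) := by
  rw [← (Fin.snocEquiv fun t : Fin (N + 1) => Fin (t.1 + 1)).sum_comp,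
    Fintype.sum_prod_type_right]
  rfl

lemma paExpect_succ {N : ℕ} (f : PASpace (N + 1) → ℝ) :
    paExpect (N + 1) f =
      paExpect N fun σ => ∑ x, paAttachProb σ x * f (Fin.snoc σ x) := by
  simp only [paExpect, sum_paSpace_succ, paWeight_snoc, mul_sum, mul_assoc]

section Degrees

variable {N : ℕ} (σ : PASpace N)

lemma paDeg_self : paDeg σ N N = 0 := by
  simp only [paDeg, lt_irrefl, if_false, zero_add, card_eq_zero, filter_eq_empty_iff]
  exact fun i _ h => ((σ i).is_lt.trans_le i.is_lt).ne h.2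

lemma sum_range_paDeg_self : ∑ j ∈ range N, paDeg σ j N = 2 * N := by
  have hfib : N = ∑ j ∈ range N, #{i : Fin N | (σ i : ℕ) = j} := by
    simpa using card_eq_sum_card_fiberwise (s := univ) (t := range N)
      fun i _ => mem_range.2 ((σ i).is_lt.trans_le i.is_lt)
  simp only [paDeg, Fin.is_lt, true_and, sum_add_distrib, ← hfib,
    sum_ite_of_true fun j hj => mem_range.1 hj]
  simp [two_mul]

lemma sum_paAttachProb : ∑ x, paAttachProb σ x = 1 := by
  have hN : (2 * (N : ℝ) + 1) ≠ 0 := by positivity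
  have hdeg : ∑ j ∈ range N, ((paDeg σ j N : ℝ) + if j = N then 1 else 0) = 2 * N := by
    rw [sum_congr rfl fun j hj => by rw [if_neg (mem_range.1 hj).ne, add_zero]]
    exact_mod_cast sum_range_paDeg_self σ
  simp only [paAttachProb, ← sum_div]
  rw [Fin.sum_univ_eq_sum_range (fun j => (paDeg σ j N : ℝ) + if j = N then 1 else 0),
    sum_range_succ, hdeg, paDeg_self, if_pos rfl, div_eq_one_iff_eq hN]
  push_cast
  ring

lemma sum_paAttachProb_of_lt {a : ℕ} (ha : a ≤ N) :
    ∑ x : Fin (N + 1), (if (x : ℕ) < a then paAttachProb σ x else 0) =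
      paDegSum σ a N / (2 * N + 1) := by
  simp only [paAttachProb]
  rw [Fin.sum_univ_eq_sum_range (fun j => if j < a then
      ((paDeg σ j N : ℝ) + if j = N then 1 else 0) / (2 * N + 1) else 0),
    ← sum_filter, paDegSum, sum_div]
  have hfilter : {j ∈ range (N + 1) | j < a} = range a := by
    ext j; simp only [mem_filter, mem_range]; omega
  rw [hfilter]
  exact sum_congr rfl fun j hj => by rw [if_neg ((mem_range.1 hj).trans_le ha).ne, add_zero]

lemma paDegSum_snoc_succ (x : Fin (N + 1)) {a : ℕ} (ha : a ≤ N) :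
    paDegSum (Fin.snoc σ x : PASpace (N + 1)) a (N + 1) =
      paDegSum σ a N + if (x : ℕ) < a then 1 else 0 := by
  simp only [paDegSum]
  rw [sum_congr rfl fun j hj => by
    rw [paDeg_snoc_succ σ x ((mem_range.1 hj).trans_le ha)]]
  push_cast
  rw [sum_add_distrib, sum_ite_eq]
  simp only [mem_range]

end Degrees

lemma paExpect_const (N : ℕ) (c : ℝ) : paExpect N (fun _ => c) = c := by
  induction N with
  | zero => simp [paExpect, paWeight]
  | succ N ih => simpa only [paExpect_succ, ← sum_mul, sum_paAttachProb, one_mul] using ih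

lemma paExpect_paDegSum_succ {a N : ℕ} (ha : a ≤ N) :
    paExpect (N + 1) (fun σ => paDegSum σ a (N + 1)) =
      (2 * N + 2) / (2 * N + 1) * paExpect N (fun σ => paDegSum σ a N) := by
  have hN : (2 * (N : ℝ) + 1) ≠ 0 := by positivity
  rw [paExpect_succ, paExpect, paExpect, mul_sum]
  refine sum_congr rfl fun σ _ => ?_
  simp only [paDegSum_snoc_succ σ _ ha, mul_add, mul_ite, mul_one, mul_zero, sum_add_distrib,
    ← sum_mul, sum_paAttachProb, sum_paAttachProb_of_lt σ ha]
  field_simp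
  ring

theorem paExpect_paDegSum {a t : ℕ} (hat : a ≤ t) :
    paExpect t (fun σ => paDegSum σ a t) =
      2 * a * ∏ i ∈ Icc (a + 1) t, (2 * (i : ℝ)) / (2 * (i : ℝ) - 1) := by
  induction t, hat using Nat.le_induction with
  | base =>
    have h : ∀ σ : PASpace a, paDegSum σ a a = 2 * a := fun σ => by
      rw [paDegSum]
      exact_mod_cast sum_range_paDeg_self σ
    simp only [h, paExpect_const, Icc_eq_empty_of_lt (Nat.lt_succ_self a), prod_empty, mul_one]
  | succ N hN ih =>
    rw [paExpect_paDegSum_succ hN, ih, prod_Icc_succ_top (by omega)]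
    push_cast
    ring

lemma Real.Gamma_add_two_div_Gamma_add_three_halves {x : ℝ} (h1 : x + 1 ≠ 0)
    (h2 : x + 1 / 2 ≠ 0) :
    Gamma (x + 1 + 1) / Gamma (x + 1 + 1 / 2) =
      Gamma (x + 1) / Gamma (x + 1 / 2) * (2 * (x + 1) / (2 * (x + 1) - 1)) := by
  rw [Gamma_add_one h1, show x + 1 + 1 / 2 = x + 1 / 2 + 1 by ring, Gamma_add_one h2,
    mul_div_mul_comm, mul_comm]
  congr 1
  field_simp
  ring

theorem prod_Icc_two_mul_div_two_mul_sub_one {a t : ℕ} (hat : a ≤ t) :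
    ∏ i ∈ Icc (a + 1) t, (2 * (i : ℝ)) / (2 * (i : ℝ) - 1) =
      Real.Gamma (t + 1) * Real.Gamma (a + 1 / 2) /
        (Real.Gamma (t + 1 / 2) * Real.Gamma (a + 1)) := by
  rw [← div_div_div_eq]
  induction t, hat using Nat.le_induction with
  | base =>
    have : Real.Gamma (a + 1) / Real.Gamma (a + 1 / 2) ≠ 0 :=
      (div_pos (Real.Gamma_pos_of_pos (by positivity))
        (Real.Gamma_pos_of_pos (by positivity))).ne'
    rw [Icc_eq_empty_of_lt (Nat.lt_succ_self a), prod_empty, div_self this]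
  | succ N hN ih =>
    rw [prod_Icc_succ_top (by omega), ih]
    push_cast
    rw [Real.Gamma_add_two_div_Gamma_add_three_halves (by positivity) (by positivity)]
    ring

theorem statement14_general (a t : ℕ) (hat : a ≤ t) :
    (∑ σ : PASpace t, paWeight σ * (∑ j ∈ Finset.range a, (paDeg σ j t : ℝ)))
        = 2 * (a : ℝ) * ∏ i ∈ Finset.Icc (a + 1) t, (2 * (i : ℝ)) / (2 * (i : ℝ) - 1) ∧
    (∑ σ : PASpace t, paWeight σ * (∑ j ∈ Finset.range a, (paDeg σ j t : ℝ)))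
        = 2 * (a : ℝ) * (Real.Gamma ((t : ℝ) + 1) * Real.Gamma ((a : ℝ) + 1 / 2)) /
            (Real.Gamma ((t : ℝ) + 1 / 2) * Real.Gamma ((a : ℝ) + 1)) := by
  have h : paExpect t (fun σ => paDegSum σ a t) = _ := paExpect_paDegSum hat
  refine ⟨h, ?_⟩
  rw [mul_div_assoc, ← prod_Icc_two_mul_div_two_mul_sub_one hat]
  exact h

/-- in the preferential attachment process `G_1^t`, for `1 ≤ a ≤ t`, the
expected value of the sum of the degrees in `G_1^t` of the first `a` vertices equals
`2a·∏_{i=a+1}^{t} (2i)/(2i−1) = 2a·Γ(t+1)Γ(a+1/2)/(Γ(t+1/2)Γ(a+1))`. -/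
theorem statement14 (a t : ℕ) (ha : 1 ≤ a) (hat : a ≤ t) :
    (∑ σ : PASpace t, paWeight σ * (∑ j ∈ Finset.range a, (paDeg σ j t : ℝ)))
        = 2 * (a : ℝ) * ∏ i ∈ Finset.Icc (a + 1) t, (2 * (i : ℝ)) / (2 * (i : ℝ) - 1) ∧
    (∑ σ : PASpace t, paWeight σ * (∑ j ∈ Finset.range a, (paDeg σ j t : ℝ)))
        = 2 * (a : ℝ) * (Real.Gamma ((t : ℝ) + 1) * Real.Gamma ((a : ℝ) + 1 / 2)) /
            (Real.Gamma ((t : ℝ) + 1 / 2) * Real.Gamma ((a : ℝ) + 1)) :=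
  statement14_general a t hat

end
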